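/- arXiv:2104.12994 — 7 statements merged into one kernel-verified Lean document; each statement's English description precedes it below -/
import Mathlib

section
/- Let G be a group that is nilpotent of class at most 3 (i.e. every triple commutator ⁅⁅x,y⁆,z⁆ lies in the center Z(G)). If a, b ∈ G satisfy (a·x)^3 = a^3·x^3 and (b·x)^3 = b^3·x^3 for all x ∈ G, then the element a∘b = b⁻¹ab² also satisfies ((a∘b)·x)^3 = (a∘b)^3·x^3 for all x ∈ G. (That is, the commutant C(°G) is closed under the gyrogroup operation ∘.) -/
/-! Since `b⁻¹ * a * b ^ 2 = b⁻¹ * (a * b) * b`, it suffices that the elements `a` with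
`(a * x) ^ n = a ^ n * x ^ n` for all `x` form a submonoid that is stable under conjugation. -/

section

variable (G : Type*) [Group G]

def powMulDistribSubmonoid (n : ℕ) : Submonoid G where
  carrier := {a | ∀ x, (a * x) ^ n = a ^ n * x ^ n}
  one_mem' x := by simp
  mul_mem' {a b} ha hb x := by
    rw [mul_assoc, ha, hb, ha b, mul_assoc]

variable {G}

theorem conj_mem_powMulDistribSubmonoid {n : ℕ} {a : G} (g : G)
    (ha : a ∈ powMulDistribSubmonoid G n) : g * a * g⁻¹ ∈ powMulDistribSubmonoid G n := by
  intro x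
  have hx : (g⁻¹ * x * g) ^ n = g⁻¹ * x ^ n * g := by simpa using conj_pow (a := g⁻¹) (b := x)
  calc (g * a * g⁻¹ * x) ^ n = g * (a * (g⁻¹ * x * g)) ^ n * g⁻¹ := by
        rw [← conj_pow]; group
    _ = g * a ^ n * g⁻¹ * x ^ n := by rw [ha, hx]; group
    _ = (g * a * g⁻¹) ^ n * x ^ n := by rw [conj_pow]

end

open scoped commutatorElement

theorem commutant_closed_under_gyrOp_general {G : Type*} [Group G]
    (a b : G)
    (ha : ∀ x : G, (a * x) ^ 3 = a ^ 3 * x ^ 3)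
    (hb : ∀ x : G, (b * x) ^ 3 = b ^ 3 * x ^ 3) :
    ∀ x : G, ((b⁻¹ * a * b ^ 2) * x) ^ 3 = (b⁻¹ * a * b ^ 2) ^ 3 * x ^ 3 := by
  have hab : a * b ∈ powMulDistribSubmonoid G 3 := Submonoid.mul_mem _ ha hb
  have hgyr : b⁻¹ * a * b ^ 2 = b⁻¹ * (a * b) * b⁻¹⁻¹ := by rw [inv_inv, pow_two]; group
  rw [hgyr]
  exact conj_mem_powMulDistribSubmonoid b⁻¹ hab

theorem commutant_closed_under_gyrOp {G : Type*} [Group G]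
    (h3 : ∀ x y z : G, ⁅⁅x, y⁆, z⁆ ∈ Subgroup.center G) (a b : G)
    (ha : ∀ x : G, (a * x) ^ 3 = a ^ 3 * x ^ 3)
    (hb : ∀ x : G, (b * x) ^ 3 = b ^ 3 * x ^ 3) :
    ∀ x : G, ((b⁻¹ * a * b ^ 2) * x) ^ 3 = (b⁻¹ * a * b ^ 2) ^ 3 * x ^ 3 :=
  commutant_closed_under_gyrOp_general a b ha hb
end

section
/- Let G be a group that is nilpotent of class at most 3 (i.e. every triple commutator ⁅⁅x,y⁆,z⁆ lies in the center Z(G)), and let a ∈ G. Then (x∘a)∘y = x∘(a∘y) for all x, y ∈ G if and only if ⁅x, ⁅a, y⁻¹⁆⁆ = 1 for all x, y ∈ G, where x∘y = y⁻¹xy² and ⁅u,v⁆ = uvu⁻¹v⁻¹. (This characterizes membership in the middle nucleus N_μ(°G).) -/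
open scoped commutatorElement

/-- The gyrogroup operation associated with a group: `x ∘ y = y⁻¹ * x * y²`. -/
def gyrOp {G : Type*} [Group G] (x y : G) : G := y⁻¹ * x * y ^ 2

/- Both bracketings expand to `(a y)⁻¹ · _ · a² y²`, with `x` in the middle on the left and its
conjugate by `⁅a, y⁻¹⁆` on the right; so they agree exactly when `x` commutes with `⁅a, y⁻¹⁆`. -/

section gyrOp

variable {G : Type*} [Group G]

theorem gyrOp_gyrOp_left (x a y : G) :
    gyrOp (gyrOp x a) y = (a * y)⁻¹ * x * (a ^ 2 * y ^ 2) := by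
  simp only [gyrOp]
  group

theorem gyrOp_gyrOp_right (x a y : G) :
    gyrOp x (gyrOp a y) = (a * y)⁻¹ * (⁅a, y⁻¹⁆ * x * ⁅a, y⁻¹⁆⁻¹) * (a ^ 2 * y ^ 2) := by
  simp only [gyrOp, commutatorElement_def, sq]
  group

theorem gyrOp_assoc_iff_commutatorElement_eq_one (x a y : G) :
    gyrOp (gyrOp x a) y = gyrOp x (gyrOp a y) ↔ ⁅x, ⁅a, y⁻¹⁆⁆ = 1 := by
  rw [gyrOp_gyrOp_left, gyrOp_gyrOp_right, mul_left_inj, mul_right_inj, eq_comm,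
    ← mul_inv_eq_one, ← commutatorElement_def, commutatorElement_eq_one_iff_commute,
    commutatorElement_eq_one_iff_commute, Commute.symm_iff]

end gyrOp

theorem mem_middleNucleus_iff_general {G : Type*} [Group G] (a : G) :
    (∀ x y : G, gyrOp (gyrOp x a) y = gyrOp x (gyrOp a y)) ↔
      (∀ x y : G, ⁅x, ⁅a, y⁻¹⁆⁆ = 1) :=
  forall₂_congr fun x y => gyrOp_assoc_iff_commutatorElement_eq_one x a y

theorem mem_middleNucleus_iff {G : Type*} [Group G]
    (h3 : ∀ x y z : G, ⁅⁅x, y⁆, z⁆ ∈ Subgroup.center G) (a : G) :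
    (∀ x y : G, gyrOp (gyrOp x a) y = gyrOp x (gyrOp a y)) ↔
      (∀ x y : G, ⁅x, ⁅a, y⁻¹⁆⁆ = 1) :=
  mem_middleNucleus_iff_general a
end

section
/- Let G be a group that is nilpotent of class at most 3 (i.e. every triple commutator ⁅⁅x,y⁆,z⁆ lies in the center Z(G)). Then the left nucleus N_λ(°G) = {a ∈ G : a∘(x∘y) = (a∘x)∘y for all x,y ∈ G} (with x∘y = y⁻¹xy²) is invariant under every automorphism ψ of G (i.e. a ∈ N_λ(°G) implies ψ(a) ∈ N_λ(°G)), and N_λ(°G) is nilpotent of class at most 2, i.e. ⁅⁅a,b⁆,c⁆ = 1 for all a, b, c ∈ N_λ(°G). -/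
open scoped commutatorElement

/-- The left nucleus `N_λ(°G)` of the gyrogroup associated with `G`. -/
def gyrLeftNucleus (G : Type*) [Group G] : Set G :=
  {a | ∀ x y : G, gyrOp a (gyrOp x y) = gyrOp (gyrOp a x) y}

section

variable {G H F : Type*} [Group G] [Group H] [FunLike F G H] [MonoidHomClass F G H]

theorem map_gyrOp (f : F) (x y : G) : f (gyrOp x y) = gyrOp (f x) (f y) := by
  simp only [gyrOp, map_mul, map_inv, map_pow]

theorem map_mem_gyrLeftNucleus {f : F} (hf : Function.Surjective f) {a : G}
    (ha : a ∈ gyrLeftNucleus G) : f a ∈ gyrLeftNucleus H := by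
  intro x y
  obtain ⟨x, rfl⟩ := hf x
  obtain ⟨y, rfl⟩ := hf y
  simpa only [map_gyrOp] using congrArg f (ha x y)

end

theorem commute_commutatorElement_of_mem_gyrLeftNucleus {G : Type*} [Group G] {c : G}
    (hc : c ∈ gyrLeftNucleus G) (a b : G) : Commute ⁅a, b⁆ c := by
  -- `c ∘ (b ∘ a⁻¹) = (c ∘ b) ∘ a⁻¹` reduces to `⁅b, a⁆ c ⁅b, a⁆⁻¹ = c`, and `⁅b, a⁆ = ⁅a, b⁆⁻¹`.
  have h := congrArg (fun z => a * b * a⁻¹ * b⁻¹ * (b * a⁻¹ * z * (a * a * b⁻¹ * b⁻¹)))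
    (hc b a⁻¹)
  simp only [gyrOp, inv_inv, pow_two] at h
  rw [Commute, SemiconjBy, commutatorElement_def]
  group at h ⊢
  exact h.symm

theorem leftNucleus_characteristic_and_class_le_two_general {G : Type*} [Group G] :
    (∀ (ψ : G ≃* G) (a : G),
      (∀ x y : G, gyrOp a (gyrOp x y) = gyrOp (gyrOp a x) y) →
      ∀ x y : G, gyrOp (ψ a) (gyrOp x y) = gyrOp (gyrOp (ψ a) x) y) ∧
    (∀ a b c : G,
      (∀ x y : G, gyrOp a (gyrOp x y) = gyrOp (gyrOp a x) y) →
      (∀ x y : G, gyrOp b (gyrOp x y) = gyrOp (gyrOp b x) y) →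
      (∀ x y : G, gyrOp c (gyrOp x y) = gyrOp (gyrOp c x) y) →
      ⁅⁅a, b⁆, c⁆ = 1) := by
  refine ⟨fun ψ a ha => map_mem_gyrLeftNucleus ψ.surjective ha, ?_⟩
  intro a b c _ _ hc
  exact commutatorElement_eq_one_iff_commute.mpr
    (commute_commutatorElement_of_mem_gyrLeftNucleus hc a b)

theorem leftNucleus_characteristic_and_class_le_two {G : Type*} [Group G]
    (h3 : ∀ x y z : G, ⁅⁅x, y⁆, z⁆ ∈ Subgroup.center G) :
    (∀ (ψ : G ≃* G) (a : G),
      (∀ x y : G, gyrOp a (gyrOp x y) = gyrOp (gyrOp a x) y) →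
      ∀ x y : G, gyrOp (ψ a) (gyrOp x y) = gyrOp (gyrOp (ψ a) x) y) ∧
    (∀ a b c : G,
      (∀ x y : G, gyrOp a (gyrOp x y) = gyrOp (gyrOp a x) y) →
      (∀ x y : G, gyrOp b (gyrOp x y) = gyrOp (gyrOp b x) y) →
      (∀ x y : G, gyrOp c (gyrOp x y) = gyrOp (gyrOp c x) y) →
      ⁅⁅a, b⁆, c⁆ = 1) :=
  leftNucleus_characteristic_and_class_le_two_general
end

section
/- Let G be a group that is nilpotent of class at most 3 (i.e. every triple commutator ⁅⁅x,y⁆,z⁆ lies in the center Z(G)), and let a ∈ G satisfy (a·x)^3 = a^3·x^3 for all x ∈ G (i.e. a lies in the commutant C(°G)). Then for every x ∈ G: ⁅a,x³⁆ = ⁅a,x⁆³ = ⁅a³,x⁆ = 1, where ⁅u,v⁆ = uvu⁻¹v⁻¹. In particular a³ lies in the center Z(G), so C(°G)³ ⊆ Z(G). -/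
open scoped commutatorElement

/-!
Since `(a * x) ^ 3 = a * b * c * x ^ 3` with `b = x a x⁻¹` and `c = x² a x⁻²`, the hypothesis says
`b * c = a ^ 2` for every `x`. Comparing this relation for `x` and for `x * a` shows that `a`
commutes with `x a x⁻¹`, so all conjugates of `a` commute with each other. The relation for `x⁻¹`,
conjugated by `x²`, reads `b * a = c ^ 2`; eliminating `c` gives `b ^ 3 = a ^ 3`, i.e. `a ^ 3` is
central. Conjugating `b * c = a ^ 2` by `x` gives `c * (x³ a x⁻³) = b ^ 2`, whence `x³ a x⁻³ = a`.
-/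

section

variable {G : Type*} [Group G]

theorem mul_pow_three_eq_mul_conj_mul_conj (a x : G) :
    (a * x) ^ 3 = a * (x * a * x⁻¹) * (x ^ 2 * a * (x ^ 2)⁻¹) * x ^ 3 := by
  simp only [pow_succ, pow_zero, one_mul]; group

theorem conj_mul_conj_eq_sq_of_mul_pow_three {a x : G} (h : (a * x) ^ 3 = a ^ 3 * x ^ 3) :
    x * a * x⁻¹ * (x ^ 2 * a * (x ^ 2)⁻¹) = a ^ 2 := by
  rw [mul_pow_three_eq_mul_conj_mul_conj, pow_succ' a 2, mul_assoc a (x * a * x⁻¹)] at h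
  exact mul_left_cancel (mul_right_cancel h)

theorem conj_mul_self_eq_sq_of_mul_pow_three {a x : G} (h : (a * x⁻¹) ^ 3 = a ^ 3 * x⁻¹ ^ 3) :
    x * a * x⁻¹ * a = (x ^ 2 * a * (x ^ 2)⁻¹) ^ 2 := by
  calc x * a * x⁻¹ * a
      = x ^ 2 * (x⁻¹ * a * x⁻¹⁻¹ * (x⁻¹ ^ 2 * a * (x⁻¹ ^ 2)⁻¹)) * (x ^ 2)⁻¹ := by group
    _ = x ^ 2 * a ^ 2 * (x ^ 2)⁻¹ := by rw [conj_mul_conj_eq_sq_of_mul_pow_three h]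
    _ = _ := conj_pow.symm

theorem commute_conj_self_of_mul_pow_three {a : G} (ha : ∀ x : G, (a * x) ^ 3 = a ^ 3 * x ^ 3)
    (x : G) : Commute a (x * a * x⁻¹) := by
  have h₁ := conj_mul_conj_eq_sq_of_mul_pow_three (ha x)
  have h₂ := conj_mul_conj_eq_sq_of_mul_pow_three (ha (x * a))
  have h : x * a * x⁻¹ * (x * (a * (x * a * x⁻¹) * a⁻¹) * x⁻¹) =
      x * a * x⁻¹ * (x * (x * a * x⁻¹) * x⁻¹) := by
    calc _ = a ^ 2 := by rw [← h₂]; simp only [sq]; group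
      _ = _ := by rw [← h₁]; group
  have h' : a * (x * a * x⁻¹) * a⁻¹ = x * a * x⁻¹ :=
    mul_left_cancel (mul_right_cancel (mul_left_cancel h))
  exact mul_inv_eq_iff_eq_mul.mp h'

theorem commute_conj_conj_of_mul_pow_three {a : G} (ha : ∀ x : G, (a * x) ^ 3 = a ^ 3 * x ^ 3)
    (g h : G) : Commute (g * a * g⁻¹) (h * a * h⁻¹) := by
  have := (commute_conj_self_of_mul_pow_three ha (g⁻¹ * h)).map (MulAut.conj g)
  simpa only [MulAut.conj_apply, mul_assoc, mul_inv_rev, inv_inv, mul_inv_cancel_left,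
    mul_inv_cancel, mul_one] using this

theorem pow_three_eq_of_mul_eq_sq {a b c : G} (hbc : Commute b c) (h₁ : b * c = a ^ 2)
    (h₂ : b * a = c ^ 2) : b ^ 3 = a ^ 3 := by
  refine mul_right_cancel (b := a) ?_
  calc b ^ 3 * a = b ^ 2 * (b * a) := by group
    _ = (b * c) ^ 2 := by rw [h₂, hbc.mul_pow]
    _ = a ^ 3 * a := by rw [h₁]; group

theorem eq_of_mul_eq_sq_of_pow_three_eq {a b c d : G} (h₁ : b * c = a ^ 2) (h₂ : c * d = b ^ 2)
    (h₃ : b ^ 3 = a ^ 3) : d = a := by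
  refine mul_left_cancel (a := a ^ 2) ?_
  calc a ^ 2 * d = b * (c * d) := by rw [← h₁, mul_assoc]
    _ = a ^ 2 * a := by rw [h₂, ← pow_succ', h₃, pow_succ]

theorem conj_pow_three_eq_of_mul_pow_three {a : G} (ha : ∀ x : G, (a * x) ^ 3 = a ^ 3 * x ^ 3)
    (x : G) : (x * a * x⁻¹) ^ 3 = a ^ 3 :=
  pow_three_eq_of_mul_eq_sq (commute_conj_conj_of_mul_pow_three ha x (x ^ 2))
    (conj_mul_conj_eq_sq_of_mul_pow_three (ha x)) (conj_mul_self_eq_sq_of_mul_pow_three (ha x⁻¹))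

theorem pow_three_mem_center_of_mul_pow_three {a : G}
    (ha : ∀ x : G, (a * x) ^ 3 = a ^ 3 * x ^ 3) : a ^ 3 ∈ Subgroup.center G :=
  Subgroup.mem_center_iff.mpr fun x =>
    mul_inv_eq_iff_eq_mul.mp (conj_pow.symm.trans (conj_pow_three_eq_of_mul_pow_three ha x))

theorem commute_pow_three_of_mul_pow_three {a : G} (ha : ∀ x : G, (a * x) ^ 3 = a ^ 3 * x ^ 3)
    (x : G) : Commute a (x ^ 3) := by
  have h₁ := conj_mul_conj_eq_sq_of_mul_pow_three (ha x)
  have h₂ : x ^ 2 * a * (x ^ 2)⁻¹ * (x ^ 3 * a * (x ^ 3)⁻¹) = (x * a * x⁻¹) ^ 2 :=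
    calc _ = x * (x * a * x⁻¹ * (x ^ 2 * a * (x ^ 2)⁻¹)) * x⁻¹ := by
          simp only [pow_succ, pow_zero, one_mul]; group
      _ = x * a ^ 2 * x⁻¹ := by rw [h₁]
      _ = _ := conj_pow.symm
  have h : x ^ 3 * a * (x ^ 3)⁻¹ = a :=
    eq_of_mul_eq_sq_of_pow_three_eq h₁ h₂ (conj_pow_three_eq_of_mul_pow_three ha x)
  exact (mul_inv_eq_iff_eq_mul.mp h).symm

theorem commutatorElement_pow_three_eq_one_of_mul_pow_three {a : G}
    (ha : ∀ x : G, (a * x) ^ 3 = a ^ 3 * x ^ 3) (x : G) : ⁅a, x⁆ ^ 3 = 1 := by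
  have hcomm : Commute a (x * a * x⁻¹)⁻¹ := (commute_conj_self_of_mul_pow_three ha x).inv_right
  calc ⁅a, x⁆ ^ 3 = (a * (x * a * x⁻¹)⁻¹) ^ 3 := by rw [commutatorElement_def]; group
    _ = a ^ 3 * ((x * a * x⁻¹) ^ 3)⁻¹ := by rw [hcomm.mul_pow, inv_pow]
    _ = 1 := by rw [conj_pow_three_eq_of_mul_pow_three ha x, mul_inv_cancel]

end

theorem commutant_element_cube_central_general {G : Type*} [Group G] (a : G)
    (ha : ∀ x : G, (a * x) ^ 3 = a ^ 3 * x ^ 3) :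
    (∀ x : G, ⁅a, x ^ 3⁆ = ⁅a, x⁆ ^ 3 ∧ ⁅a, x⁆ ^ 3 = ⁅a ^ 3, x⁆ ∧ ⁅a ^ 3, x⁆ = 1) ∧
      a ^ 3 ∈ Subgroup.center G := by
  have hcenter := pow_three_mem_center_of_mul_pow_three ha
  refine ⟨fun x => ?_, hcenter⟩
  have h₁ : ⁅a, x ^ 3⁆ = 1 :=
    commutatorElement_eq_one_iff_commute.mpr (commute_pow_three_of_mul_pow_three ha x)
  have h₂ : ⁅a, x⁆ ^ 3 = 1 := commutatorElement_pow_three_eq_one_of_mul_pow_three ha x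
  have h₃ : ⁅a ^ 3, x⁆ = 1 :=
    commutatorElement_eq_one_iff_commute.mpr (Subgroup.mem_center_iff.mp hcenter x).symm
  exact ⟨h₁.trans h₂.symm, h₂.trans h₃.symm, h₃⟩

theorem commutant_element_cube_central {G : Type*} [Group G]
    (h3 : ∀ x y z : G, ⁅⁅x, y⁆, z⁆ ∈ Subgroup.center G) (a : G)
    (ha : ∀ x : G, (a * x) ^ 3 = a ^ 3 * x ^ 3) :
    (∀ x : G, ⁅a, x ^ 3⁆ = ⁅a, x⁆ ^ 3 ∧ ⁅a, x⁆ ^ 3 = ⁅a ^ 3, x⁆ ∧ ⁅a ^ 3, x⁆ = 1) ∧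
      a ^ 3 ∈ Subgroup.center G :=
  commutant_element_cube_central_general a ha
end

section
/- Let G be a group that is nilpotent of class at most 3 (i.e. every triple commutator ⁅⁅x,y⁆,z⁆ lies in the center Z(G)), and let a ∈ G satisfy (a·x)^3 = a^3·x^3 for all x ∈ G (i.e. a lies in the commutant C(°G)). Then a∘(x∘y) = (a∘x)∘y for all x,y ∈ G if and only if (x∘y)∘a = x∘(y∘a) for all x,y ∈ G, where x∘y = y⁻¹xy². (Hence the center Z(°G) of the associated gyrogroup equals C(°G) ∩ N_i(°G) for each of the left, middle and right nuclei.) -/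
/-!
On the commutator side, `a` lies in the left nucleus iff it centralizes every commutator, and in
the right nucleus iff every `⁅a⁻¹, y⁆` is central. The latter implies the former in any group:
`g ↦ ⁅a⁻¹, g⁆` is then a homomorphism into the center, so it kills commutators.

Conversely, if `a` centralizes the commutators, the cube condition at `w` reads
`⁅a⁻¹, w⁆ ^ 3 = ⁅⁅a⁻¹, w⁆, w⁆`. In class 3 the pairing `β x y = ⁅⁅a⁻¹, y⁆, x⁆` is central,
has exponent 3, and is symmetric because `⁅a⁻¹, x * y⁆ = ⁅a⁻¹, y * x⁆`; the cube condition
at `x * y` then gives `β x y ^ 2 = 1`, hence `β = 1`.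
-/

open scoped commutatorElement

open Subgroup

section Commutators

variable {G : Type*} [Group G]

theorem commute_of_mem_center {z : G} (hz : z ∈ center G) (g : G) : Commute z g :=
  (mem_center_iff.mp hz g).symm

theorem gyrOp_gyrOp_eq_gyrOp_gyrOp_left_iff (a x y : G) :
    gyrOp a (gyrOp x y) = gyrOp (gyrOp a x) y ↔ Commute a ⁅y⁻¹, x⁆ := by
  have h : gyrOp a (gyrOp x y) * (gyrOp (gyrOp a x) y)⁻¹
      = (y⁻¹ * y⁻¹ * x⁻¹ * y) * ⁅a, ⁅y⁻¹, x⁆⁆ * (y⁻¹ * y⁻¹ * x⁻¹ * y)⁻¹ := by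
    simp only [gyrOp, commutatorElement_def, sq]
    group
  rw [← mul_inv_eq_one, h, conj_eq_one_iff, commutatorElement_eq_one_iff_commute]

theorem gyrOp_gyrOp_eq_gyrOp_gyrOp_right_iff (a x y : G) :
    gyrOp (gyrOp x y) a = gyrOp x (gyrOp y a) ↔ Commute ⁅a⁻¹, y⁆ x := by
  have h : gyrOp (gyrOp x y) a * (gyrOp x (gyrOp y a))⁻¹
      = (a⁻¹ * y⁻¹ * ⁅a⁻¹, y⁆⁻¹) * ⁅⁅a⁻¹, y⁆, x⁆ * (a⁻¹ * y⁻¹ * ⁅a⁻¹, y⁆⁻¹)⁻¹ := by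
    simp only [gyrOp, commutatorElement_def, sq]
    group
  rw [← mul_inv_eq_one, h, conj_eq_one_iff, commutatorElement_eq_one_iff_commute]

theorem commutatorElement_mul_left_of_mem_center {g h c : G} (hh : ⁅h, c⁆ ∈ center G) :
    ⁅g * h, c⁆ = ⁅g, c⁆ * ⁅h, c⁆ := by
  rw [commutatorElement_mul_left_eq_conj_mul, mem_center_iff.mp hh, mul_inv_cancel_right,
    mem_center_iff.mp hh]

theorem commutatorElement_mul_right_of_mem_center {c g h : G} (hh : ⁅c, h⁆ ∈ center G) :
    ⁅c, g * h⁆ = ⁅c, g⁆ * ⁅c, h⁆ := by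
  rw [commutatorElement_mul_right_eq_mul_conj, mul_assoc _ g, mem_center_iff.mp hh,
    ← mul_assoc, mul_inv_cancel_right]

theorem commutatorElement_center_mul {z m c : G} (hz : z ∈ center G) :
    ⁅z * m, c⁆ = ⁅m, c⁆ := by
  rw [commutatorElement_mul_left_eq_conj_mul,
    commutatorElement_eq_one_iff_commute.mpr (commute_of_mem_center hz c), mul_one, ← mem_center_iff.mp hz, mul_inv_cancel_right]

theorem commutatorElement_pow_left_of_mem_center {k c : G} (hk : ⁅k, c⁆ ∈ center G) (n : ℕ) :
    ⁅k ^ n, c⁆ = ⁅k, c⁆ ^ n := by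
  induction n with
  | zero => simp
  | succ n ih => rw [pow_succ, commutatorElement_mul_left_of_mem_center hk, ih, pow_succ]

theorem commute_commutatorElement_of_forall_commutatorElement_mem_center {c : G}
    (hc : ∀ g, ⁅c, g⁆ ∈ center G) (u v : G) : Commute c ⁅u, v⁆ := by
  let f : G →* G := MonoidHom.mk' (fun g ↦ ⁅c, g⁆)
    fun _ h ↦ commutatorElement_mul_right_of_mem_center (hc h)
  rw [← commutatorElement_eq_one_iff_commute]
  calc ⁅c, ⁅u, v⁆⁆ = ⁅f u, f v⁆ := map_commutatorElement f u v
    _ = 1 := commutatorElement_eq_one_iff_commute.mpr (mem_center_iff.mp (hc v) _)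

theorem commutatorElement_inv_pow_three_of_mul_pow_three {a w : G} (hk : Commute a ⁅a⁻¹, w⁆)
    (ha : (a * w) ^ 3 = a ^ 3 * w ^ 3) : ⁅a⁻¹, w⁆ ^ 3 = ⁅⁅a⁻¹, w⁆, w⁆ := by
  set k := ⁅a⁻¹, w⁆
  have hconj : a⁻¹ * w * a = k * w := by simp only [k, commutatorElement_def]; group
  have hconj2 : a⁻¹ * (a⁻¹ * w * a) * a = k * k * w := by
    rw [hconj, ← mul_assoc, hk.inv_left.eq, mul_assoc k, mul_assoc k, hconj, mul_assoc]
  have hcube : a ^ 3 * (k * k * w * (k * w) * w) = a ^ 3 * w ^ 3 := by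
    rw [← hconj, ← hconj2, ← ha]
    simp only [pow_succ, pow_zero, one_mul]
    group
  have hkw : k * k * w * k = w := by
    refine mul_right_cancel (b := w) (mul_right_cancel (b := w) ?_)
    simpa only [mul_assoc, pow_succ, pow_one, pow_zero, one_mul] using mul_left_cancel hcube
  calc k ^ 3 = k * (k * k * w * k) * w⁻¹ * k⁻¹ * ⁅k, w⁆ := by
        simp only [commutatorElement_def, pow_succ, pow_zero, one_mul]; group
    _ = ⁅k, w⁆ := by rw [hkw]; group

theorem commute_commutatorElement_commutatorElement
    (hG : ∀ x y z : G, ⁅⁅x, y⁆, z⁆ ∈ center G) (u v s t : G) : Commute ⁅u, v⁆ ⁅s, t⁆ :=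
  commute_commutatorElement_of_forall_commutatorElement_mem_center (hG u v) s t

theorem commutatorElement_mul_right_eq_of_mem_center {g x y : G} (h : ⁅⁅g, y⁆, x⁆ ∈ center G) :
    ⁅g, x * y⁆ = ⁅⁅g, y⁆, x⁆⁻¹ * ⁅g, x⁆ * ⁅g, y⁆ := by
  have hconj : x * ⁅g, y⁆ * x⁻¹ = ⁅⁅g, y⁆, x⁆⁻¹ * ⁅g, y⁆ := by
    simp only [commutatorElement_def]; group
  rw [commutatorElement_mul_right_eq_mul_conj, mul_assoc _ x, mul_assoc, hconj, ← mul_assoc,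
    ← mem_center_iff.mp (inv_mem h)]

variable {a : G}

theorem commutatorElement_inv_mul_comm (hG : ∀ x y z : G, ⁅⁅x, y⁆, z⁆ ∈ center G)
    (hL : ∀ u v : G, Commute a ⁅u, v⁆) (x y : G) : ⁅a⁻¹, x * y⁆ = ⁅a⁻¹, y * x⁆ := by
  have hxy : x * y = ⁅x, y⁆ * (y * x) := by simp only [commutatorElement_def]; group
  rw [hxy, commutatorElement_mul_right_eq_mul_conj,
    commutatorElement_eq_one_iff_commute.mpr (hL x y).inv_left, one_mul,
    (commute_commutatorElement_commutatorElement hG x y a⁻¹ (y * x)).eq, mul_inv_cancel_right]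

theorem commutatorElement_commutatorElement_inv_comm (hG : ∀ x y z : G, ⁅⁅x, y⁆, z⁆ ∈ center G)
    (hL : ∀ u v : G, Commute a ⁅u, v⁆) (x y : G) : ⁅⁅a⁻¹, y⁆, x⁆ = ⁅⁅a⁻¹, x⁆, y⁆ := by
  have h := commutatorElement_inv_mul_comm hG hL x y
  rw [commutatorElement_mul_right_eq_of_mem_center (hG _ _ _),
    commutatorElement_mul_right_eq_of_mem_center (hG _ _ _), mul_assoc, mul_assoc,
    (commute_commutatorElement_commutatorElement hG a⁻¹ y a⁻¹ x).eq] at h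
  exact inv_injective (mul_right_cancel h)

theorem commutatorElement_commutatorElement_inv_pow_three
    (hG : ∀ x y z : G, ⁅⁅x, y⁆, z⁆ ∈ center G) (hL : ∀ u v : G, Commute a ⁅u, v⁆)
    (ha : ∀ x : G, (a * x) ^ 3 = a ^ 3 * x ^ 3) (x y : G) : ⁅⁅a⁻¹, y⁆, x⁆ ^ 3 = 1 := by
  rw [← commutatorElement_pow_left_of_mem_center (hG _ _ _),
    commutatorElement_inv_pow_three_of_mul_pow_three (hL a⁻¹ y) (ha y)]
  exact commutatorElement_eq_one_iff_commute.mpr (commute_of_mem_center (hG _ _ _) x)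

theorem commutatorElement_commutatorElement_inv_mul_comm_eq_one
    (hG : ∀ x y z : G, ⁅⁅x, y⁆, z⁆ ∈ center G) (hL : ∀ u v : G, Commute a ⁅u, v⁆)
    (ha : ∀ x : G, (a * x) ^ 3 = a ^ 3 * x ^ 3) (x y : G) :
    ⁅⁅a⁻¹, x⁆, y⁆ * ⁅⁅a⁻¹, y⁆, x⁆ = 1 := by
  have hcube := commutatorElement_inv_pow_three_of_mul_pow_three (hL a⁻¹ (x * y)) (ha (x * y))
  have hβ : ⁅⁅a⁻¹, y⁆, x⁆⁻¹ ∈ center G := inv_mem (hG _ _ _)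
  rw [commutatorElement_mul_right_eq_of_mem_center (hG _ _ _), mul_assoc,
    commutatorElement_center_mul hβ,
    (commute_of_mem_center hβ _).mul_pow, inv_pow,
    commutatorElement_commutatorElement_inv_pow_three hG hL ha, inv_one, one_mul,
    (commute_commutatorElement_commutatorElement hG a⁻¹ x a⁻¹ y).mul_pow,
    commutatorElement_mul_left_of_mem_center (hG _ _ _),
    commutatorElement_mul_right_of_mem_center (hG _ _ _),
    commutatorElement_mul_right_of_mem_center (hG _ _ _),
    commutatorElement_inv_pow_three_of_mul_pow_three (hL a⁻¹ x) (ha x),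
    commutatorElement_inv_pow_three_of_mul_pow_three (hL a⁻¹ y) (ha y)] at hcube
  rw [mul_assoc _ ⁅⁅a⁻¹, x⁆, y⁆, ← mul_assoc ⁅⁅a⁻¹, x⁆, y⁆] at hcube
  exact mul_eq_right.mp (mul_left_cancel hcube).symm

theorem commutatorElement_commutatorElement_inv_eq_one
    (hG : ∀ x y z : G, ⁅⁅x, y⁆, z⁆ ∈ center G) (hL : ∀ u v : G, Commute a ⁅u, v⁆)
    (ha : ∀ x : G, (a * x) ^ 3 = a ^ 3 * x ^ 3) (x y : G) : ⁅⁅a⁻¹, y⁆, x⁆ = 1 := by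
  have hsq : ⁅⁅a⁻¹, y⁆, x⁆ ^ 2 = 1 := by
    rw [sq]
    nth_rw 1 [commutatorElement_commutatorElement_inv_comm hG hL]
    exact commutatorElement_commutatorElement_inv_mul_comm_eq_one hG hL ha x y
  calc ⁅⁅a⁻¹, y⁆, x⁆ = ⁅⁅a⁻¹, y⁆, x⁆ ^ 3 := by rw [pow_succ, hsq, one_mul]
    _ = 1 := commutatorElement_commutatorElement_inv_pow_three hG hL ha x y

end Commutators

theorem commutant_left_nucleus_iff_right_nucleus {G : Type*} [Group G]
    (h3 : ∀ x y z : G, ⁅⁅x, y⁆, z⁆ ∈ Subgroup.center G) (a : G)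
    (ha : ∀ x : G, (a * x) ^ 3 = a ^ 3 * x ^ 3) :
    (∀ x y : G, gyrOp a (gyrOp x y) = gyrOp (gyrOp a x) y) ↔
      (∀ x y : G, gyrOp (gyrOp x y) a = gyrOp x (gyrOp y a)) := by
  simp only [gyrOp_gyrOp_eq_gyrOp_gyrOp_left_iff, gyrOp_gyrOp_eq_gyrOp_gyrOp_right_iff]
  constructor
  · intro hL x y
    have hL' : ∀ u v : G, Commute a ⁅u, v⁆ := fun u v ↦ by simpa using hL v u⁻¹
    exact commutatorElement_eq_one_iff_commute.mp
      (commutatorElement_commutatorElement_inv_eq_one h3 hL' ha x y)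
  · intro hR x y
    have hcentral : ∀ g, ⁅a⁻¹, g⁆ ∈ center G :=
      fun g ↦ mem_center_iff.mpr fun h ↦ (hR h g).eq.symm
    simpa using
      (commute_commutatorElement_of_forall_commutatorElement_mem_center hcentral y⁻¹ x).inv_left
end

section
/- Let G be a finite group that is nilpotent of class at most 3 (i.e. every triple commutator ⁅⁅x,y⁆,z⁆ lies in the center Z(G)), and suppose 3 does not divide the order of G. Then the commutant of the associated gyrogroup equals the center of G: for a ∈ G, one has (a·x)^3 = a^3·x^3 for all x ∈ G if and only if a ∈ Z(G). -/
/-!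
The identity `(a * x) ^ 3 = a ^ 3 * x ^ 3` cancels to `x * a * x * a = a * a * (x * x)`. Applying
it to `x` and to `x * a` shows that `u = ⁅a⁻¹, x⁆` commutes with `a` and that `x` conjugates `u`
to `u ^ (-2)`. Since `⁅u, x⁆` is central, conjugation by `x` fixes `⁅u, x⁆ = u ^ 3` while sending
it to `u ^ (-6)`, so `u ^ 9 = 1`; as `9` is prime to `|G|`, `u = 1`.
-/

open scoped commutatorElement

section

variable {G : Type*} [Group G]

theorem mul_pow_three_eq_mul_pow_three_iff {a x : G} :
    (a * x) ^ 3 = a ^ 3 * x ^ 3 ↔ x * a * x * a = a * a * (x * x) := by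
  rw [show (a * x) ^ 3 = a * (x * a * x * a) * x by simp only [pow_three, mul_assoc],
    show a ^ 3 * x ^ 3 = a * (a * a * (x * x)) * x by simp only [pow_three, mul_assoc],
    mul_right_cancel_iff, mul_left_cancel_iff]

theorem zpow_sub_one_sq_eq_one_of_conj_eq_zpow {u x : G} {k : ℤ} (hk : x * u * x⁻¹ = u ^ k)
    (hc : Commute x ⁅u, x⁆) : u ^ ((k - 1) ^ 2) = 1 := by
  have hcomm : ⁅u, x⁆ = u ^ (1 - k) := by
    rw [zpow_sub, zpow_one, ← hk]
    group
  have hconj : x * u ^ (1 - k) * x⁻¹ = u ^ (k * (1 - k)) := by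
    rw [← conj_zpow, hk, ← zpow_mul]
  have hfix : x * u ^ (1 - k) * x⁻¹ = u ^ (1 - k) := by
    rw [← hcomm]
    exact mul_inv_eq_of_eq_mul hc.eq
  rw [show (k - 1) ^ 2 = (1 - k) - k * (1 - k) by ring, zpow_sub, ← hconj, hfix, mul_inv_cancel]

variable {a : G}

theorem conj_commutatorElement_mul_self_of_mul_pow_three
    (h : ∀ y : G, (a * y) ^ 3 = a ^ 3 * y ^ 3) (x : G) :
    a⁻¹ * ⁅a⁻¹, x⁆ * a * ⁅a⁻¹, x⁆ = x * ⁅a⁻¹, x⁆⁻¹ * x⁻¹ := by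
  have hx := mul_pow_three_eq_mul_pow_three_iff.1 (h x)
  calc a⁻¹ * ⁅a⁻¹, x⁆ * a * ⁅a⁻¹, x⁆
      = a⁻¹ * a⁻¹ * (x * a * x * a) * x⁻¹ * ⁅a⁻¹, x⁆⁻¹ * x⁻¹ := by group
    _ = x * ⁅a⁻¹, x⁆⁻¹ * x⁻¹ := by rw [hx]; group

theorem commute_commutatorElement_inv_of_mul_pow_three
    (h : ∀ y : G, (a * y) ^ 3 = a ^ 3 * y ^ 3) (x : G) : Commute a ⁅a⁻¹, x⁆ := by
  have hxa := mul_pow_three_eq_mul_pow_three_iff.1 (h (x * a))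
  have key : a⁻¹ * ⁅a⁻¹, x⁆ * a * ⁅a⁻¹, x⁆ * (x * a * ⁅a⁻¹, x⁆ * (x * a)) = x * a * (x * a) :=
    calc _ = a⁻¹ * a⁻¹ * (x * a * a * (x * a) * a) := by group
      _ = x * a * (x * a) := by rw [hxa]; group
  have hfix : ⁅a⁻¹, x⁆⁻¹ * a * ⁅a⁻¹, x⁆ = a :=
    calc ⁅a⁻¹, x⁆⁻¹ * a * ⁅a⁻¹, x⁆
        = x⁻¹ * (x * ⁅a⁻¹, x⁆⁻¹ * x⁻¹ * (x * a * ⁅a⁻¹, x⁆ * (x * a))) * a⁻¹ * x⁻¹ := by group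
      _ = a := by rw [← conj_commutatorElement_mul_self_of_mul_pow_three h, key]; group
  calc a * ⁅a⁻¹, x⁆ = ⁅a⁻¹, x⁆ * (⁅a⁻¹, x⁆⁻¹ * a * ⁅a⁻¹, x⁆) := by group
    _ = ⁅a⁻¹, x⁆ * a := by rw [hfix]

theorem conj_commutatorElement_inv_of_mul_pow_three
    (h : ∀ y : G, (a * y) ^ 3 = a ^ 3 * y ^ 3) (x : G) :
    x * ⁅a⁻¹, x⁆ * x⁻¹ = ⁅a⁻¹, x⁆ ^ (-2 : ℤ) := by
  have hsq := conj_commutatorElement_mul_self_of_mul_pow_three h x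
  rw [(commute_commutatorElement_inv_of_mul_pow_three h x).inv_left.eq,
    inv_mul_cancel_right] at hsq
  calc x * ⁅a⁻¹, x⁆ * x⁻¹ = (x * ⁅a⁻¹, x⁆⁻¹ * x⁻¹)⁻¹ := by group
    _ = ⁅a⁻¹, x⁆ ^ (-2 : ℤ) := by rw [← hsq, zpow_neg, zpow_two]

end

theorem commutant_eq_center_of_not_three_dvd_card {G : Type*} [Group G] [Fintype G]
    (h3 : ∀ x y z : G, ⁅⁅x, y⁆, z⁆ ∈ Subgroup.center G)
    (hcard : ¬ (3 ∣ Fintype.card G)) (a : G) :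
    (∀ x : G, (a * x) ^ 3 = a ^ 3 * x ^ 3) ↔ a ∈ Subgroup.center G := by
  refine ⟨fun h => Subgroup.mem_center_iff.2 fun x => ?_,
    fun ha x => Commute.mul_pow (Subgroup.mem_center_iff.1 ha x).symm 3⟩
  have hu9 : ⁅a⁻¹, x⁆ ^ (9 : ℕ) = 1 := by
    simpa using zpow_sub_one_sq_eq_one_of_conj_eq_zpow
      (conj_commutatorElement_inv_of_mul_pow_three h x)
      (Subgroup.mem_center_iff.1 (h3 a⁻¹ x x) x)
  have hcop : (Nat.card G).Coprime 9 := by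
    rw [Nat.card_eq_fintype_card]
    exact Nat.Coprime.pow_right 2 ((Nat.Prime.coprime_iff_not_dvd Nat.prime_three).2 hcard).symm
  have hu : ⁅a⁻¹, x⁆ = 1 := (powCoprime hcop).injective (by simpa using hu9)
  exact (Commute.inv_left_iff.1 (commutatorElement_eq_one_iff_commute.1 hu)).eq.symm
end

section
/- Let G be a group that is nilpotent of class at most 3 (i.e. every triple commutator ⁅⁅x,y⁆,z⁆ lies in the center Z(G)). Then for all x, y, z ∈ G, the associator of the associated gyrogroup is given by (x∘y)∘z = ⁅⁅z⁻¹,y⁆,x⁆ · (x∘(y∘z)), where x∘y = y⁻¹xy² and ⁅u,v⁆ = uvu⁻¹v⁻¹; in particular every associator A(x,y,z) = ⁅⁅z⁻¹,y⁆,x⁆ lies in the center Z(G). -/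
open scoped commutatorElement

/-! In every group `(x ∘ y) ∘ z = (⁅⁅z⁻¹, y⁆, x⁆ * x) ∘ (y ∘ z)`, i.e. the associator is the
conjugate of `⁅⁅z⁻¹, y⁆, x⁆` by `y ∘ z`. In class at most 3 this triple commutator is central,
so the conjugation is trivial and it can be pulled out of the left argument of `∘`. -/

theorem gyrOp_gyrOp {G : Type*} [Group G] (x y z : G) :
    gyrOp (gyrOp x y) z = gyrOp (⁅⁅z⁻¹, y⁆, x⁆ * x) (gyrOp y z) := by
  simp only [gyrOp, commutatorElement_def, pow_two]
  group

theorem gyrOp_mul_left_of_mem_center {G : Type*} [Group G] {c : G} (hc : c ∈ Subgroup.center G)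
    (x y : G) : gyrOp (c * x) y = c * gyrOp x y := by
  simp only [gyrOp, ← mul_assoc, Subgroup.mem_center_iff.mp hc y⁻¹]

theorem associator_eq_triple_commutator {G : Type*} [Group G]
    (h3 : ∀ x y z : G, ⁅⁅x, y⁆, z⁆ ∈ Subgroup.center G) :
    ∀ x y z : G,
      gyrOp (gyrOp x y) z = ⁅⁅z⁻¹, y⁆, x⁆ * gyrOp x (gyrOp y z) ∧
      ⁅⁅z⁻¹, y⁆, x⁆ ∈ Subgroup.center G := fun x y z =>
  ⟨by rw [gyrOp_gyrOp, gyrOp_mul_left_of_mem_center (h3 z⁻¹ y x)], h3 z⁻¹ y x⟩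
end
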